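/- Let n ≥ 2 and d ≥ 1 be integers and let μ be a finite Borel measure on K_n^d invariant under permutations of the n ball factors, with moments z_0 = μ(K_n^d), z_α = ∫ s_α dμ, z_{αα} = ∫ s_{αα} dμ for 1 ≤ α ≤ d. Then there exists a positive semidefinite real symmetric (2d+2)×(2d+2) matrix X (rows and columns indexed by 0, 1, …, 2d+1) such that ⟨D, X⟩ = 0, ⟨M_0, X⟩ = z_0, ⟨M_α, X⟩ = z_α for 1 ≤ α ≤ d, and ⟨M_{αα}, X⟩ = z_{αα} for 1 ≤ α ≤ d, where ⟨A, B⟩ = trace(AB) and D, M_0, M_α, M_{αα} are the matrices defined in the context. -/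

import Mathlib

open scoped BigOperators
open MeasureTheory

/-- `sLin n d α x = ∑ i, ξ_{i,α}` -/
noncomputable def sLin (n d : ℕ) (α : Fin d) (x : Fin n → Fin d → ℝ) : ℝ :=
  ∑ i, x i α

/-- `sQuad n d α x = ∑_{i ≠ j} ξ_{i,α} ξ_{j,α}` (sum over ordered pairs). -/
noncomputable def sQuad (n d : ℕ) (α : Fin d) (x : Fin n → Fin d → ℝ) : ℝ :=
  ∑ i, ∑ j, if i = j then 0 else x i α * x j α

/-- The diagonal matrix `D` of size `(2d+2) × (2d+2)`: `D_{0,0} = −1`,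
`D_{α,α} = 1/n` for `1 ≤ α ≤ d`, `D_{j,j} = 1` for `d+1 ≤ j ≤ 2d+1`. -/
noncomputable def Dmat (n d : ℕ) : Matrix (Fin (2 * d + 2)) (Fin (2 * d + 2)) ℝ :=
  Matrix.diagonal fun j =>
    if j.val = 0 then -1 else if j.val ≤ d then 1 / (n : ℝ) else 1

/-- `M_0`: only nonzero entry is `(M_0)_{0,0} = 1`. -/
noncomputable def M0mat (d : ℕ) : Matrix (Fin (2 * d + 2)) (Fin (2 * d + 2)) ℝ :=
  fun i j => if i.val = 0 ∧ j.val = 0 then 1 else 0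

/-- `M_α`: only nonzero entries are `(M_α)_{0,α} = (M_α)_{α,0} = √n/2`. -/
noncomputable def Mlin (n d : ℕ) (α : Fin d) :
    Matrix (Fin (2 * d + 2)) (Fin (2 * d + 2)) ℝ :=
  fun i j =>
    if (i.val = 0 ∧ j.val = (α : ℕ) + 1) ∨ (i.val = (α : ℕ) + 1 ∧ j.val = 0)
    then Real.sqrt n / 2 else 0

/-- `M_{αα}`: only nonzero entries are `(M_{αα})_{α,α} = n − 1` and
`(M_{αα})_{d+α,d+α} = −n`. -/
noncomputable def Mquad (n d : ℕ) (α : Fin d) :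
    Matrix (Fin (2 * d + 2)) (Fin (2 * d + 2)) ℝ :=
  Matrix.diagonal fun j =>
    if j.val = (α : ℕ) + 1 then (n : ℝ) - 1
    else if j.val = d + ((α : ℕ) + 1) then -(n : ℝ) else 0

open Matrix

/-!
Take for `X` the second moment matrix `∫ w wᵀ dμ` of the vector
`w(x) = (1, (s_α/√n)_α, (√v_α)_α, √r)`, where `v_α = (q_α - s_α²/n)/n` with `q_α = ∑ᵢ ξ_{i,α}²`
is an empirical variance (nonnegative by Cauchy–Schwarz) and `r = 1 - ∑_α q_α/n` is nonnegative
on `K_n^d`. Such a matrix is positive semidefinite and `⟨A, X⟩ = ∫ wᵀ A w dμ`, so every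
constraint becomes a pointwise identity: `wᵀ D w = -1 + ∑_α q_α/n + r = 0` on `K_n^d`,
`wᵀ M_0 w = 1`, `wᵀ M_α w = s_α` and `wᵀ M_{αα} w = (n-1)s_α²/n - n v_α = s_α² - q_α = s_{αα}`.
-/

theorem Matrix.dotProduct_single_mulVec {ι R : Type*} [Fintype ι] [DecidableEq ι] [CommSemiring R]
    (v : ι → R) (i j : ι) (c : R) :
    v ⬝ᵥ single i j c *ᵥ v = v i * c * v j := by
  rw [single_mulVec, ← Pi.single, dotProduct_single, mul_assoc]

section SecondMoment

variable {Ω ι : Type*} [MeasurableSpace Ω] [Fintype ι]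

noncomputable def secondMomentMatrix (μ : Measure Ω) (w : Ω → ι → ℝ) : Matrix ι ι ℝ :=
  Matrix.of fun j k => ∫ x, w x j * w x k ∂μ

variable {μ : Measure Ω} {w : Ω → ι → ℝ}

theorem integral_sum_mul_eq_sum_mul_secondMomentMatrix
    (hw : ∀ j, MemLp (fun x => w x j) 2 μ) (c : ι → ι → ℝ) :
    ∫ x, ∑ j, ∑ k, c j k * (w x j * w x k) ∂μ =
      ∑ j, ∑ k, c j k * secondMomentMatrix μ w j k := by
  have hint : ∀ j k, Integrable (fun x => w x j * w x k) μ := fun j k =>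
    (hw j).integrable_mul (hw k)
  rw [integral_finsetSum _ fun j _ => integrable_finsetSum _ fun k _ => (hint j k).const_mul _]
  refine Finset.sum_congr rfl fun j _ => ?_
  rw [integral_finsetSum _ fun k _ => (hint j k).const_mul _]
  exact Finset.sum_congr rfl fun k _ => integral_const_mul _ _

theorem posSemidef_secondMomentMatrix (hw : ∀ j, MemLp (fun x => w x j) 2 μ) :
    (secondMomentMatrix μ w).PosSemidef := by
  refine .of_dotProduct_mulVec_nonneg ?_ fun v => ?_
  · ext j k
    simp only [Matrix.conjTranspose_apply, star_trivial, secondMomentMatrix, Matrix.of_apply,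
      mul_comm]
  · have hquad : star v ⬝ᵥ secondMomentMatrix μ w *ᵥ v =
        ∫ x, ∑ j, ∑ k, (v j * v k) * (w x j * w x k) ∂μ := by
      rw [integral_sum_mul_eq_sum_mul_secondMomentMatrix hw]
      simp only [dotProduct, Matrix.mulVec, star_trivial, Finset.mul_sum]
      exact Finset.sum_congr rfl fun j _ => Finset.sum_congr rfl fun k _ => by ring
    rw [hquad]
    refine integral_nonneg fun x => ?_
    have hsq : ∑ j, ∑ k, (v j * v k) * (w x j * w x k) = (∑ j, v j * w x j) ^ 2 := by
      rw [sq, Finset.sum_mul_sum]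
      exact Finset.sum_congr rfl fun j _ => Finset.sum_congr rfl fun k _ => by ring
    rw [hsq]
    positivity

theorem trace_mul_secondMomentMatrix (hw : ∀ j, MemLp (fun x => w x j) 2 μ)
    (A : Matrix ι ι ℝ) :
    (A * secondMomentMatrix μ w).trace = ∫ x, w x ⬝ᵥ A *ᵥ w x ∂μ := by
  have hform : ∀ x, w x ⬝ᵥ A *ᵥ w x = ∑ j, ∑ k, A k j * (w x j * w x k) := by
    intro x
    simp only [dotProduct, Matrix.mulVec, Finset.mul_sum]
    rw [Finset.sum_comm]
    exact Finset.sum_congr rfl fun j _ => Finset.sum_congr rfl fun k _ => by ring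
  simp only [hform, integral_sum_mul_eq_sum_mul_secondMomentMatrix hw, Matrix.trace,
    Matrix.diag, Matrix.mul_apply]
  rw [Finset.sum_comm]

end SecondMoment

theorem MeasureTheory.MemLp.of_continuous_of_ae_mem_compact {α E : Type*} [MeasurableSpace α]
    [TopologicalSpace α] [OpensMeasurableSpace α] [NormedAddCommGroup E]
    [SecondCountableTopologyEither α E] {μ : Measure α} [IsFiniteMeasure μ] {p : ENNReal}
    {K : Set α} (hK : IsCompact K) (hμK : ∀ᵐ x ∂μ, x ∈ K) {f : α → E} (hf : Continuous f) :
    MemLp f p μ := by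
  obtain ⟨C, hC⟩ := hK.exists_bound_of_continuousOn hf.continuousOn
  exact .of_bound hf.aestronglyMeasurable C (hμK.mono hC)

section Certificate

variable {n d : ℕ}

noncomputable def sumSq (n d : ℕ) (α : Fin d) (x : Fin n → Fin d → ℝ) : ℝ :=
  ∑ i, x i α ^ 2

noncomputable def empiricalVariance (n d : ℕ) (α : Fin d) (x : Fin n → Fin d → ℝ) : ℝ :=
  (sumSq n d α x - sLin n d α x ^ 2 / n) / n

noncomputable def slack (n d : ℕ) (x : Fin n → Fin d → ℝ) : ℝ :=
  1 - (∑ α, sumSq n d α x) / n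

theorem sQuad_eq_sLin_sq_sub_sumSq (α : Fin d) (x : Fin n → Fin d → ℝ) :
    sQuad n d α x = sLin n d α x ^ 2 - sumSq n d α x := by
  simp only [sQuad, sLin, sumSq, sq, Finset.sum_mul_sum, ← Finset.sum_sub_distrib]
  refine Finset.sum_congr rfl fun i _ => ?_
  rw [← Finset.add_sum_erase _ _ (Finset.mem_univ i),
    ← Finset.add_sum_erase _ _ (Finset.mem_univ i),
    Finset.sum_congr rfl fun j hj => if_neg (Finset.ne_of_mem_erase hj).symm]
  simp

theorem empiricalVariance_nonneg (α : Fin d) (x : Fin n → Fin d → ℝ) :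
    0 ≤ empiricalVariance n d α x := by
  have cauchySchwarz : sLin n d α x ^ 2 ≤ n * sumSq n d α x := by
    simpa [sLin, sumSq] using sq_sum_le_card_mul_sum_sq (s := Finset.univ) (f := fun i => x i α)
  rcases n.eq_zero_or_pos with rfl | hn
  · simp [empiricalVariance]
  · have hn' : (0 : ℝ) < n := by exact_mod_cast hn
    have hmean : sLin n d α x ^ 2 / n ≤ sumSq n d α x := by
      rw [div_le_iff₀ hn']
      linarith
    exact div_nonneg (sub_nonneg.mpr hmean) hn'.le

theorem slack_nonneg (hn : 0 < n) {x : Fin n → Fin d → ℝ} (hx : ∀ i, ∑ α, x i α ^ 2 ≤ 1) :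
    0 ≤ slack n d x := by
  have hsum : ∑ α, sumSq n d α x ≤ n := by
    simp only [sumSq]
    rw [Finset.sum_comm]
    simpa using Finset.sum_le_sum fun i (_ : i ∈ Finset.univ) => hx i
  rw [slack, sub_nonneg, div_le_one (by exact_mod_cast hn)]
  exact hsum

def linIdx (α : Fin d) : Fin (2 * d + 2) := ⟨α + 1, by omega⟩

def varIdx (α : Fin d) : Fin (2 * d + 2) := ⟨d + α + 1, by omega⟩

@[simp] theorem val_linIdx (α : Fin d) : (linIdx α).val = α + 1 := rfl

@[simp] theorem val_varIdx (α : Fin d) : (varIdx α).val = d + α + 1 := rfl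

theorem Fin.sum_univ_two_mul_add_two {M : Type*} [AddCommMonoid M] (f : Fin (2 * d + 2) → M) :
    ∑ j, f j = f 0 + ∑ α, f (linIdx α) + ∑ α, f (varIdx α) + f (Fin.last _) := by
  rw [← Equiv.sum_comp (finCongr (by omega : 1 + (d + (d + 1)) = 2 * d + 2)) f, Fin.sum_univ_add,
    Fin.sum_univ_add, Fin.sum_univ_add, Fin.sum_univ_one, Fin.sum_univ_one, ← add_assoc,
    ← add_assoc]
  congr 2
  · congr 1
    exact Finset.sum_congr rfl fun α _ => congrArg f (Fin.ext (by simp [linIdx]; omega))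
  · exact Finset.sum_congr rfl fun α _ => congrArg f (Fin.ext (by simp [varIdx]; omega))
  · ext
    simp only [finCongr_apply, Fin.val_cast, Fin.val_natAdd, Fin.val_last]
    omega

noncomputable def momentVec (n d : ℕ) (x : Fin n → Fin d → ℝ) (j : Fin (2 * d + 2)) : ℝ :=
  if h₀ : j.val = 0 then 1
  else if h₁ : j.val ≤ d then sLin n d ⟨j.val - 1, by omega⟩ x / √n
  else if h₂ : j.val ≤ 2 * d then √(empiricalVariance n d ⟨j.val - d - 1, by omega⟩ x)
  else √(slack n d x)

section momentVec

variable (x : Fin n → Fin d → ℝ) (α : Fin d)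

@[simp] theorem momentVec_zero : momentVec n d x 0 = 1 := by simp [momentVec]

@[simp] theorem momentVec_linIdx : momentVec n d x (linIdx α) = sLin n d α x / √n := by
  simp [momentVec, linIdx, Nat.succ_le_of_lt α.isLt]

@[simp] theorem momentVec_varIdx : momentVec n d x (varIdx α) = √(empiricalVariance n d α x) := by
  simp [momentVec, varIdx, add_assoc, show ¬ 2 * d < d + (α + 1) by omega]

@[simp] theorem momentVec_last : momentVec n d x (Fin.last _) = √(slack n d x) := by
  simp [momentVec, show ¬ 2 * d + 1 ≤ d by omega]

end momentVec

theorem norm_le_one_of_sum_sq_le_one {x : Fin n → Fin d → ℝ} (hx : ∀ i, ∑ α, x i α ^ 2 ≤ 1) :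
    ‖x‖ ≤ 1 := by
  refine (pi_norm_le_iff_of_nonneg zero_le_one).mpr fun i => ?_
  refine (pi_norm_le_iff_of_nonneg zero_le_one).mpr fun α => ?_
  rw [Real.norm_eq_abs, ← sq_le_one_iff_abs_le_one]
  exact (Finset.single_le_sum (fun β _ => sq_nonneg (x i β)) (Finset.mem_univ α)).trans (hx i)

theorem continuous_momentVec (j : Fin (2 * d + 2)) : Continuous fun x => momentVec n d x j := by
  unfold momentVec empiricalVariance slack sumSq sLin
  split_ifs <;> fun_prop

variable {x : Fin n → Fin d → ℝ}

theorem momentVec_dotProduct_Dmat_mulVec (hn : 0 < n) (hx : ∀ i, ∑ α, x i α ^ 2 ≤ 1) :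
    momentVec n d x ⬝ᵥ Dmat n d *ᵥ momentVec n d x = 0 := by
  have hn' : (0 : ℝ) < n := by exact_mod_cast hn
  have hexpand : momentVec n d x ⬝ᵥ Dmat n d *ᵥ momentVec n d x =
      -1 + ∑ α, (n : ℝ)⁻¹ * (sLin n d α x / √n) ^ 2 + ∑ α, empiricalVariance n d α x +
        slack n d x := by
    simp only [Dmat, dotProduct, mulVec_diagonal]
    rw [Fin.sum_univ_two_mul_add_two]
    simp (disch := omega) [if_neg, Real.mul_self_sqrt (slack_nonneg hn hx),
      Real.mul_self_sqrt (empiricalVariance_nonneg _ x), sq, mul_left_comm]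
  have hterm (α : Fin d) : (n : ℝ)⁻¹ * (sLin n d α x / √n) ^ 2 + empiricalVariance n d α x =
      sumSq n d α x / n := by
    rw [empiricalVariance, div_pow, Real.sq_sqrt hn'.le]
    field_simp
    ring
  rw [hexpand, add_assoc (-1 : ℝ), ← Finset.sum_add_distrib]
  simp only [hterm, ← Finset.sum_div, slack]
  ring

theorem momentVec_dotProduct_M0mat_mulVec :
    momentVec n d x ⬝ᵥ M0mat d *ᵥ momentVec n d x = 1 := by
  have hM : M0mat d = single 0 0 1 := by
    ext i j
    simp only [M0mat, single_apply, Fin.ext_iff, Fin.val_zero, eq_comm]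
  simp [hM, dotProduct_single_mulVec]

theorem momentVec_dotProduct_Mlin_mulVec (hn : 0 < n) (α : Fin d) :
    momentVec n d x ⬝ᵥ Mlin n d α *ᵥ momentVec n d x = sLin n d α x := by
  have hM : Mlin n d α = single 0 (linIdx α) (√n / 2) + single (linIdx α) 0 (√n / 2) := by
    ext i j
    simp only [Mlin, Matrix.add_apply, single_apply, Fin.ext_iff, val_linIdx, Fin.val_zero]
    split_ifs <;> first | omega | simp
  have hsqrt : √(n : ℝ) ≠ 0 := by positivity
  simp only [hM, add_mulVec, dotProduct_add, dotProduct_single_mulVec, momentVec_zero,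
    momentVec_linIdx]
  field_simp
  ring

theorem momentVec_dotProduct_Mquad_mulVec (hn : 0 < n) (α : Fin d) :
    momentVec n d x ⬝ᵥ Mquad n d α *ᵥ momentVec n d x = sQuad n d α x := by
  have hn' : (0 : ℝ) < n := by exact_mod_cast hn
  have hexpand : momentVec n d x ⬝ᵥ Mquad n d α *ᵥ momentVec n d x =
      (n - 1) * (sLin n d α x / √n) ^ 2 - n * empiricalVariance n d α x := by
    simp only [Mquad, dotProduct, mulVec_diagonal]
    rw [Fin.sum_univ_two_mul_add_two]
    have hlin (β : Fin d) : (β : ℕ) + 1 ≠ d + (α + 1) := by omega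
    have hvar (β : Fin d) : d + (β + 1) ≠ α + 1 := by omega
    simp [hlin, hvar, add_assoc, Fin.val_inj, show 2 * d ≠ α by omega,
      show 2 * d + 1 ≠ d + (α + 1) by omega, Real.mul_self_sqrt (empiricalVariance_nonneg _ x),
      sq, mul_left_comm, sub_eq_add_neg]
  rw [hexpand, sQuad_eq_sLin_sq_sub_sumSq, empiricalVariance, div_pow, Real.sq_sqrt hn'.le]
  field_simp
  ring

end Certificate

theorem stmt_17_general (n d : ℕ) (hn : 2 ≤ n)
    (μ : Measure (Fin n → Fin d → ℝ)) [IsFiniteMeasure μ]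
    -- μ is supported on K_n^d
    (hsupp : μ {x | ¬ ∀ i, ∑ α, (x i α) ^ 2 ≤ 1} = 0)
    (z0 : ℝ) (z zz : Fin d → ℝ)
    (hz0 : z0 = (μ {x | ∀ i, ∑ α, (x i α) ^ 2 ≤ 1}).toReal)
    (hz : ∀ α, z α = ∫ x, sLin n d α x ∂μ)
    (hzz : ∀ α, zz α = ∫ x, sQuad n d α x ∂μ) :
    ∃ X : Matrix (Fin (2 * d + 2)) (Fin (2 * d + 2)) ℝ,
      X.PosSemidef ∧
      (Dmat n d * X).trace = 0 ∧
      (M0mat d * X).trace = z0 ∧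
      (∀ α, (Mlin n d α * X).trace = z α) ∧
      (∀ α, (Mquad n d α * X).trace = zz α) := by
  have hn₀ : 0 < n := by omega
  have hK : ∀ᵐ x ∂μ, ∀ i, ∑ α, x i α ^ 2 ≤ 1 := ae_iff.mpr hsupp
  have hw (j : Fin (2 * d + 2)) : MemLp (fun x => momentVec n d x j) 2 μ :=
    .of_continuous_of_ae_mem_compact (isCompact_closedBall 0 1)
      (hK.mono fun x hx => mem_closedBall_zero_iff.mpr (norm_le_one_of_sum_sq_le_one hx))
      (continuous_momentVec j)
  refine ⟨secondMomentMatrix μ (momentVec n d), posSemidef_secondMomentMatrix hw, ?_, ?_,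
    fun α => ?_, fun α => ?_⟩ <;> rw [trace_mul_secondMomentMatrix hw]
  · exact integral_eq_zero_of_ae (hK.mono fun x hx => momentVec_dotProduct_Dmat_mulVec hn₀ hx)
  · have hμK : μ {x | ∀ i, ∑ α, x i α ^ 2 ≤ 1} = μ Set.univ :=
      measure_congr (ae_eq_univ.mpr (by rwa [Set.compl_ofPred]))
    simp [momentVec_dotProduct_M0mat_mulVec, hz0, hμK, Measure.real]
  · simp only [momentVec_dotProduct_Mlin_mulVec hn₀, hz]
  · simp only [momentVec_dotProduct_Mquad_mulVec hn₀, hzz]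

theorem stmt_17 (n d : ℕ) (hn : 2 ≤ n) (hd : 1 ≤ d)
    (μ : Measure (Fin n → Fin d → ℝ)) [IsFiniteMeasure μ]
    -- μ is supported on K_n^d
    (hsupp : μ {x | ¬ ∀ i, ∑ α, (x i α) ^ 2 ≤ 1} = 0)
    -- μ is invariant under permutations of the n ball factors
    (hsym : ∀ σ : Equiv.Perm (Fin n),
      Measure.map (fun x : Fin n → Fin d → ℝ => fun i => x (σ i)) μ = μ)
    (z0 : ℝ) (z zz : Fin d → ℝ)
    (hz0 : z0 = (μ {x | ∀ i, ∑ α, (x i α) ^ 2 ≤ 1}).toReal)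
    (hz : ∀ α, z α = ∫ x, sLin n d α x ∂μ)
    (hzz : ∀ α, zz α = ∫ x, sQuad n d α x ∂μ) :
    ∃ X : Matrix (Fin (2 * d + 2)) (Fin (2 * d + 2)) ℝ,
      X.PosSemidef ∧
      (Dmat n d * X).trace = 0 ∧
      (M0mat d * X).trace = z0 ∧
      (∀ α, (Mlin n d α * X).trace = z α) ∧
      (∀ α, (Mquad n d α * X).trace = zz α) :=
  stmt_17_general n d hn μ hsupp z0 z zz hz0 hz hzz
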